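/- Let M be a unitary right 𝕜𝒢-module over an ample groupoid 𝒢. For x in the unit space, define the stalk M_x as the direct limit of the corners M(U) = Mχ_U over compact open neighborhoods U of x, with transition maps m ↦ mχ_V for V ⊆ U. For each arrow g : y → x and compact open bisection U containing g, the map R_g([m]_x) = [mχ_U]_y is well-defined (independent of the choice of U and of representative m) and 𝕜-linear, and satisfies R_h ∘ R_g = R_{gh} for composable (g,h) and R_x = id on M_x for units x. -/

import Mathlib

open Set

structure TopGroupoid (Γ : Type) [TopologicalSpace Γ] where
  d : Γ → Γ
  r : Γ → Γ
  mul : Γ → Γ → Γ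
  inv : Γ → Γ
  r_d : ∀ g, r (d g) = d g
  d_r : ∀ g, d (r g) = r g
  d_mul : ∀ g h, d g = r h → d (mul g h) = d h
  r_mul : ∀ g h, d g = r h → r (mul g h) = r g
  mul_assoc : ∀ g h k, d g = r h → d h = r k → mul (mul g h) k = mul g (mul h k)
  mul_d : ∀ g, mul g (d g) = g
  r_mul_self : ∀ g, mul (r g) g = g
  d_inv : ∀ g, d (inv g) = r g
  r_inv : ∀ g, r (inv g) = d g
  mul_inv : ∀ g, mul g (inv g) = r g
  inv_mul : ∀ g, mul (inv g) g = d g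
  continuous_d : Continuous d
  continuous_r : Continuous r
  continuous_inv : Continuous inv
  continuous_mul : ContinuousOn (fun p : Γ × Γ => mul p.1 p.2) {p | d p.1 = r p.2}

namespace TopGroupoid

variable {Γ : Type} [TopologicalSpace Γ] (G : TopGroupoid Γ)

/-- The unit space, identified with its image in the arrow space. -/
def units : Set Γ := Set.range G.d

/-- `f` restricted to `U` is a homeomorphism onto its (open) image. -/
def IsPartialHomeoOn (f : Γ → Γ) (U : Set Γ) : Prop :=
  Set.InjOn f U ∧ IsOpen (f '' U) ∧ ∀ V, V ⊆ U → IsOpen V → IsOpen (f '' V)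

/-- A local bisection: an open set on which both `d` and `r` restrict to
homeomorphisms onto their images. -/
def IsBisection (U : Set Γ) : Prop :=
  IsOpen U ∧ IsPartialHomeoOn G.d U ∧ IsPartialHomeoOn G.r U

/-- The groupoid is étale: the domain map is a local homeomorphism. -/
def Etale : Prop := ∀ g : Γ, ∃ U, g ∈ U ∧ IsOpen U ∧ IsPartialHomeoOn G.d U

/-- Setwise product of subsets of the arrow space. -/
def bisMul (U V : Set Γ) : Set Γ :=
  {k | ∃ u ∈ U, ∃ v ∈ V, G.d u = G.r v ∧ k = G.mul u v}

/-- Setwise inverse. -/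
def bisInv (U : Set Γ) : Set Γ := G.inv '' U

/-- Ample: étale, the unit space is Hausdorff and has a basis of compact open sets. -/
def Ample : Prop :=
  G.Etale ∧
    (∀ x y, x ∈ G.units → y ∈ G.units → x ≠ y →
      ∃ U V : Set Γ, IsOpen U ∧ IsOpen V ∧ x ∈ U ∧ y ∈ V ∧ U ∩ V ∩ G.units = ∅) ∧
    ∀ x ∈ G.units, ∀ W : Set Γ, IsOpen W → x ∈ W →
      ∃ K : Set Γ, K ⊆ G.units ∧ x ∈ K ∧ K ⊆ W ∧ IsOpen K ∧ IsCompact K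

/-- Convolution product of `𝕜`-valued functions on the arrow space. -/
noncomputable def conv {𝕜 : Type} [CommRing 𝕜] (f₁ f₂ : Γ → 𝕜) : Γ → 𝕜 :=
  fun g => ∑ᶠ h ∈ {h : Γ | G.d h = G.d g}, f₁ (G.mul g (G.inv h)) * f₂ h

/-- Characteristic function of a set. -/
noncomputable def chi (𝕜 : Type) [CommRing 𝕜] (U : Set Γ) : Γ → 𝕜 :=
  Set.indicator U 1

/-- The groupoid algebra `𝕜𝒢`, as the span of characteristic functions of
compact open local bisections. -/
def grpAlg (𝕜 : Type) [CommRing 𝕜] : Submodule 𝕜 (Γ → 𝕜) :=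
  Submodule.span 𝕜 {f | ∃ U : Set Γ, G.IsBisection U ∧ IsCompact U ∧ f = chi 𝕜 U}

end TopGroupoid
/-- Germ equality at `x`: two module elements have the same image in the stalk
`M_x = colim_{x ∈ W} Mχ_W` (the colimit over compact open neighbourhoods `W` of
`x` in the unit space, with restriction maps `m ↦ mχ_W`). -/
def germEq {Γ : Type} [TopologicalSpace Γ] (G : TopGroupoid Γ) (𝕜 : Type)
    [CommRing 𝕜] {M : Type} (act : M → (Γ → 𝕜) → M) (x : Γ) (a b : M) : Prop :=
  ∃ W : Set Γ, W ⊆ G.units ∧ IsOpen W ∧ IsCompact W ∧ x ∈ W ∧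
    act a (TopGroupoid.chi 𝕜 W) = act b (TopGroupoid.chi 𝕜 W)

/-! The argument rests on `χ_U * χ_V = χ_{UV}` for compact open bisections: since `r` is
injective on `U`, the convolution sum defining `(χ_U * χ_V)(g)` has at most one nonzero term,
and it has one exactly when `g ∈ UV`. With this, linearity and functoriality hold already in `M`,
and `R_x = id` because `χ_W χ_K = χ_K` for unit neighbourhoods `K ⊆ W`. -/

namespace TopGroupoid

section Groupoid

variable {Γ : Type} [TopologicalSpace Γ] (G : TopGroupoid Γ)

lemma d_mem_units (g : Γ) : G.d g ∈ G.units := ⟨g, rfl⟩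

lemma d_of_mem_units {u : Γ} (hu : u ∈ G.units) : G.d u = u := by
  obtain ⟨g, rfl⟩ := hu
  simpa only [G.r_d] using G.d_r (G.d g)

lemma r_of_mem_units {u : Γ} (hu : u ∈ G.units) : G.r u = u := by
  obtain ⟨g, rfl⟩ := hu
  exact G.r_d g

lemma d_mul_inv {g h : Γ} (hd : G.d h = G.d g) : G.d (G.mul g (G.inv h)) = G.r h := by
  rw [G.d_mul _ _ (by rw [G.r_inv, hd]), G.d_inv]

lemma r_mul_inv {g h : Γ} (hd : G.d h = G.d g) : G.r (G.mul g (G.inv h)) = G.r g :=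
  G.r_mul _ _ (by rw [G.r_inv, hd])

lemma mul_inv_mul_cancel {g h : Γ} (hd : G.d h = G.d g) :
    G.mul (G.mul g (G.inv h)) h = g := by
  rw [G.mul_assoc _ _ _ (by rw [G.r_inv, hd]) (G.d_inv h), G.inv_mul, hd, G.mul_d]

lemma mul_mul_inv_cancel {u v : Γ} (h : G.d u = G.r v) :
    G.mul (G.mul u v) (G.inv v) = u := by
  rw [G.mul_assoc _ _ _ h (G.r_inv v).symm, G.mul_inv, ← h, G.mul_d]

lemma inv_mul_inv_mul_self {g h : Γ} (hd : G.d h = G.d g) :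
    G.mul (G.inv (G.mul g (G.inv h))) g = h := by
  set a := G.mul g (G.inv h)
  conv_lhs => rw [← G.mul_inv_mul_cancel hd]
  rw [← G.mul_assoc _ _ _ (G.d_inv a) (G.d_mul_inv hd), G.inv_mul, G.d_mul_inv hd,
    G.r_mul_self]

lemma eq_of_mul_inv_mem {U : Set Γ} (hU : InjOn G.r U) {g h₁ h₂ : Γ}
    (hd₁ : G.d h₁ = G.d g) (hd₂ : G.d h₂ = G.d g)
    (h₁U : G.mul g (G.inv h₁) ∈ U) (h₂U : G.mul g (G.inv h₂) ∈ U) : h₁ = h₂ := by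
  have h : G.mul g (G.inv h₁) = G.mul g (G.inv h₂) :=
    hU h₁U h₂U ((G.r_mul_inv hd₁).trans (G.r_mul_inv hd₂).symm)
  rw [← G.inv_mul_inv_mul_self hd₁, h, G.inv_mul_inv_mul_self hd₂]

lemma mem_bisMul_iff {U V : Set Γ} {g : Γ} :
    g ∈ G.bisMul U V ↔ ∃ h, G.d h = G.d g ∧ G.mul g (G.inv h) ∈ U ∧ h ∈ V := by
  constructor
  · rintro ⟨u, hu, v, hv, huv, rfl⟩
    exact ⟨v, (G.d_mul u v huv).symm, by rwa [G.mul_mul_inv_cancel huv], hv⟩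
  · rintro ⟨h, hd, hU, hV⟩
    exact ⟨_, hU, h, hV, G.d_mul_inv hd, (G.mul_inv_mul_cancel hd).symm⟩

lemma bisMul_of_subset_units_left {W S : Set Γ} (hW : W ⊆ G.units) :
    G.bisMul W S = S ∩ G.r ⁻¹' W := by
  ext k
  constructor
  · rintro ⟨u, hu, v, hv, huv, rfl⟩
    have hu' : u = G.r v := by rw [← G.d_of_mem_units (hW hu), huv]
    subst hu'
    rw [G.r_mul_self]
    exact ⟨hv, hu⟩
  · rintro ⟨hk, hrk⟩
    exact ⟨G.r k, hrk, k, hk, G.d_r k, (G.r_mul_self k).symm⟩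

lemma bisMul_of_subset_units_right {S K : Set Γ} (hK : K ⊆ G.units) :
    G.bisMul S K = S ∩ G.d ⁻¹' K := by
  ext k
  constructor
  · rintro ⟨u, hu, v, hv, huv, rfl⟩
    have hv' : v = G.d u := by rw [huv, G.r_of_mem_units (hK hv)]
    subst hv'
    rw [G.mul_d]
    exact ⟨hu, hv⟩
  · rintro ⟨hk, hdk⟩
    exact ⟨k, hk, G.d k, hdk, (G.r_d k).symm, (G.mul_d k).symm⟩

lemma conv_chi_chi_apply (𝕜 : Type) [CommRing 𝕜] (U V : Set Γ) (g : Γ) :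
    G.conv (chi 𝕜 U) (chi 𝕜 V) g =
      ∑ᶠ h ∈ {h | G.d h = G.d g ∧ G.mul g (G.inv h) ∈ U ∧ h ∈ V}, (1 : 𝕜) := by
  have hprod : (fun h => chi 𝕜 U (G.mul g (G.inv h)) * chi 𝕜 V h) =
      indicator {h | G.mul g (G.inv h) ∈ U ∧ h ∈ V} 1 := by
    ext h
    by_cases hU : G.mul g (G.inv h) ∈ U <;> by_cases hV : h ∈ V <;> simp [chi, hU, hV]
  rw [conv, finsum_mem_def, hprod, indicator_indicator, ← finsum_mem_def]
  rfl

lemma conv_chi_chi (𝕜 : Type) [CommRing 𝕜] {U V : Set Γ} (hU : InjOn G.r U) :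
    G.conv (chi 𝕜 U) (chi 𝕜 V) = chi 𝕜 (G.bisMul U V) := by
  ext g
  rw [G.conv_chi_chi_apply]
  set F := {h | G.d h = G.d g ∧ G.mul g (G.inv h) ∈ U ∧ h ∈ V}
  have hg : g ∈ G.bisMul U V ↔ F.Nonempty := G.mem_bisMul_iff
  have hF : F.Subsingleton :=
    fun h₁ h₁F h₂ h₂F => G.eq_of_mul_inv_mem hU h₁F.1 h₂F.1 h₁F.2.1 h₂F.2.1
  rcases hF.eq_empty_or_singleton with hF | ⟨h, hF⟩ <;> simp [chi, hg, hF]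

end Groupoid

section Bisection

variable {Γ : Type} [TopologicalSpace Γ] {G : TopGroupoid Γ}

lemma IsPartialHomeoOn.mono {f : Γ → Γ} {U V : Set Γ} (hf : IsPartialHomeoOn f U)
    (hVU : V ⊆ U) (hV : IsOpen V) : IsPartialHomeoOn f V :=
  ⟨hf.1.mono hVU, hf.2.2 V hVU hV, fun W hW => hf.2.2 W (hW.trans hVU)⟩

lemma isPartialHomeoOn_of_eqOn_id {f : Γ → Γ} {U : Set Γ} (hf : EqOn f id U)
    (hU : IsOpen U) : IsPartialHomeoOn f U :=
  ⟨injOn_id U |>.congr hf.symm, hf.image_eq_self.symm ▸ hU,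
    fun _ hV hVo => (hf.mono hV).image_eq_self.symm ▸ hVo⟩

lemma IsBisection.mono {U V : Set Γ} (hU : G.IsBisection U) (hVU : V ⊆ U)
    (hV : IsOpen V) : G.IsBisection V :=
  ⟨hV, hU.2.1.mono hVU hV, hU.2.2.mono hVU hV⟩

lemma isBisection_of_subset_units {K : Set Γ} (hK : K ⊆ G.units) (hKo : IsOpen K) :
    G.IsBisection K :=
  ⟨hKo, isPartialHomeoOn_of_eqOn_id (fun _ hu => G.d_of_mem_units (hK hu)) hKo,
    isPartialHomeoOn_of_eqOn_id (fun _ hu => G.r_of_mem_units (hK hu)) hKo⟩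

lemma IsPartialHomeoOn.isCompact_inter_preimage {f : Γ → Γ} {U K : Set Γ}
    (hf : IsPartialHomeoOn f U) (hfc : Continuous f) (hU : IsOpen U) (hK : IsCompact K)
    (hKU : K ⊆ f '' U) : IsCompact (U ∩ f ⁻¹' K) := by
  have hemb : Topology.IsOpenEmbedding (f ∘ Subtype.val : U → Γ) := by
    refine .of_continuous_injective_isOpenMap (hfc.comp continuous_subtype_val)
      (fun a b hab => Subtype.ext (hf.1 a.2 b.2 hab)) fun V hV => ?_
    rw [image_comp]
    exact hf.2.2 _ (Subtype.coe_image_subset U V) (hU.isOpenMap_subtype_val V hV)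
  have hKrange : K ⊆ range (f ∘ Subtype.val : U → Γ) := by
    rwa [range_comp, Subtype.range_coe]
  have hcpt := (hemb.isInducing.isCompact_preimage' hK hKrange).image continuous_subtype_val
  rwa [preimage_comp, Subtype.image_preimage_coe] at hcpt

lemma inter_preimage_d_eq_of_subset_image {U T K : Set Γ} (hU : InjOn G.d U) (hTU : T ⊆ U)
    (hK : K ⊆ G.d '' T) : U ∩ G.d ⁻¹' K = T ∩ G.d ⁻¹' K := by
  refine Subset.antisymm (fun u ⟨hu, huK⟩ => ⟨?_, huK⟩) (inter_subset_inter_left _ hTU)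
  obtain ⟨t, ht, htu⟩ := hK huK
  exact hU (hTU ht) hu htu ▸ ht

end Bisection

section Stalk

variable {Γ : Type} [TopologicalSpace Γ] (G : TopGroupoid Γ)
  {𝕜 : Type} [CommRing 𝕜] {M : Type} {act : M → (Γ → 𝕜) → M}

lemma act_chi_chi
    (act_conv : ∀ m f₁ f₂, f₁ ∈ G.grpAlg 𝕜 → f₂ ∈ G.grpAlg 𝕜 →
      act (act m f₁) f₂ = act m (G.conv f₁ f₂))
    {U V : Set Γ} (hU : G.IsBisection U) (hUc : IsCompact U) (hV : G.IsBisection V)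
    (hVc : IsCompact V) (m : M) :
    act (act m (chi 𝕜 U)) (chi 𝕜 V) = act m (chi 𝕜 (G.bisMul U V)) := by
  rw [act_conv m _ _ (Submodule.subset_span ⟨U, hU, hUc, rfl⟩)
    (Submodule.subset_span ⟨V, hV, hVc, rfl⟩), G.conv_chi_chi 𝕜 hU.2.2.1]

lemma act_chi_units_chi
    (act_conv : ∀ m f₁ f₂, f₁ ∈ G.grpAlg 𝕜 → f₂ ∈ G.grpAlg 𝕜 →
      act (act m f₁) f₂ = act m (G.conv f₁ f₂))
    {W S : Set Γ} (hWu : W ⊆ G.units) (hWo : IsOpen W) (hWc : IsCompact W)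
    (hS : G.IsBisection S) (hSc : IsCompact S) (hSW : S ⊆ G.r ⁻¹' W) (m : M) :
    act (act m (chi 𝕜 W)) (chi 𝕜 S) = act m (chi 𝕜 S) := by
  rw [G.act_chi_chi act_conv (isBisection_of_subset_units hWu hWo) hWc hS hSc,
    G.bisMul_of_subset_units_left hWu, inter_eq_left.2 hSW]

lemma act_chi_chi_units
    (act_conv : ∀ m f₁ f₂, f₁ ∈ G.grpAlg 𝕜 → f₂ ∈ G.grpAlg 𝕜 →
      act (act m f₁) f₂ = act m (G.conv f₁ f₂))
    {U K : Set Γ} (hU : G.IsBisection U) (hUc : IsCompact U)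
    (hKu : K ⊆ G.units) (hKo : IsOpen K) (hKc : IsCompact K) (m : M) :
    act (act m (chi 𝕜 U)) (chi 𝕜 K) = act m (chi 𝕜 (U ∩ G.d ⁻¹' K)) := by
  rw [G.act_chi_chi act_conv hU hUc (isBisection_of_subset_units hKu hKo) hKc,
    G.bisMul_of_subset_units_right hKu]

lemma germEq_of_eq (hG : G.Ample) {x : Γ} (hx : x ∈ G.units) {a b : M} (h : a = b) :
    germEq G 𝕜 act x a b := by
  obtain ⟨K, hKu, hxK, -, hKo, hKc⟩ := hG.2.2 x hx univ isOpen_univ trivial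
  exact ⟨K, hKu, hKo, hKc, hxK, h ▸ rfl⟩

lemma germEq_act_chi_units (hG : G.Ample)
    (act_conv : ∀ m f₁ f₂, f₁ ∈ G.grpAlg 𝕜 → f₂ ∈ G.grpAlg 𝕜 →
      act (act m f₁) f₂ = act m (G.conv f₁ f₂))
    {x : Γ} (hx : x ∈ G.units) {W : Set Γ} (hWu : W ⊆ G.units) (hWo : IsOpen W)
    (hWc : IsCompact W) (hxW : x ∈ W) (m : M) :
    germEq G 𝕜 act x (act m (chi 𝕜 W)) m := by
  obtain ⟨K, hKu, hxK, hKW, hKo, hKc⟩ := hG.2.2 x hx W hWo hxW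
  refine ⟨K, hKu, hKo, hKc, hxK, ?_⟩
  exact G.act_chi_units_chi act_conv hWu hWo hWc (isBisection_of_subset_units hKu hKo) hKc
    (fun k hk => by rw [mem_preimage, G.r_of_mem_units (hKu hk)]; exact hKW hk) m

/-- Cutting `U` and `U'` down to `U ∩ d⁻¹(K)` for a small enough compact open `K ∋ d g`
makes them agree and puts their range inside the neighbourhood `W` witnessing `[m] = [n]`. -/
lemma germEq_act_chi (hG : G.Ample)
    (act_conv : ∀ m f₁ f₂, f₁ ∈ G.grpAlg 𝕜 → f₂ ∈ G.grpAlg 𝕜 →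
      act (act m f₁) f₂ = act m (G.conv f₁ f₂))
    {g : Γ} {m n : M} {U U' : Set Γ}
    (hU : G.IsBisection U) (hUc : IsCompact U) (hgU : g ∈ U)
    (hU' : G.IsBisection U') (hU'c : IsCompact U') (hgU' : g ∈ U')
    (hmn : germEq G 𝕜 act (G.r g) m n) :
    germEq G 𝕜 act (G.d g) (act m (chi 𝕜 U)) (act n (chi 𝕜 U')) := by
  obtain ⟨W, hWu, hWo, hWc, hgW, hmn⟩ := hmn
  set T := U ∩ U' ∩ G.r ⁻¹' W
  have hTo : IsOpen T := (hU.1.inter hU'.1).inter (hWo.preimage G.continuous_r)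
  have hTU : T ⊆ U := fun _ ht => ht.1.1
  have hTU' : T ⊆ U' := fun _ ht => ht.1.2
  obtain ⟨K, hKu, hgK, hKT, hKo, hKc⟩ := hG.2.2 (G.d g) (G.d_mem_units g) (G.d '' T)
    (hU.2.1.2.2 T hTU hTo) ⟨g, ⟨⟨hgU, hgU'⟩, hgW⟩, rfl⟩
  set S := T ∩ G.d ⁻¹' K
  have hUS : U ∩ G.d ⁻¹' K = S := inter_preimage_d_eq_of_subset_image hU.2.1.1 hTU hKT
  have hU'S : U' ∩ G.d ⁻¹' K = S := inter_preimage_d_eq_of_subset_image hU'.2.1.1 hTU' hKT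
  have hS : G.IsBisection S :=
    hU.mono (inter_subset_left.trans hTU) (hTo.inter (hKo.preimage G.continuous_d))
  have hSc : IsCompact S := hUS ▸ hU.2.1.isCompact_inter_preimage G.continuous_d hU.1 hKc
    (hKT.trans (image_mono hTU))
  have hSW : S ⊆ G.r ⁻¹' W := fun _ hs => hs.1.2
  refine ⟨K, hKu, hKo, hKc, hgK, ?_⟩
  calc act (act m (chi 𝕜 U)) (chi 𝕜 K) = act m (chi 𝕜 S) := by
        rw [G.act_chi_chi_units act_conv hU hUc hKu hKo hKc, hUS]
    _ = act (act m (chi 𝕜 W)) (chi 𝕜 S) :=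
        (G.act_chi_units_chi act_conv hWu hWo hWc hS hSc hSW m).symm
    _ = act (act n (chi 𝕜 W)) (chi 𝕜 S) := by rw [hmn]
    _ = act n (chi 𝕜 S) := G.act_chi_units_chi act_conv hWu hWo hWc hS hSc hSW n
    _ = act (act n (chi 𝕜 U')) (chi 𝕜 K) := by
        rw [G.act_chi_chi_units act_conv hU' hU'c hKu hKo hKc, hU'S]

end Stalk

end TopGroupoid

open TopGroupoid in
theorem stalk_action_well_defined_general {Γ : Type} [TopologicalSpace Γ]
    (G : TopGroupoid Γ) (hG : G.Ample) (𝕜 : Type) [CommRing 𝕜]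
    (M : Type) [AddCommGroup M] [Module 𝕜 M] (act : M → (Γ → 𝕜) → M)
    (act_addm : ∀ m n f, act (m + n) f = act m f + act n f)
    (act_smulm : ∀ (c : 𝕜) m f, act (c • m) f = c • act m f)
    (act_conv : ∀ m f₁ f₂, f₁ ∈ G.grpAlg 𝕜 → f₂ ∈ G.grpAlg 𝕜 →
      act (act m f₁) f₂ = act m (G.conv f₁ f₂)) :
    -- well-definedness: independent of the representative and of the bisection
    (∀ (g : Γ) (m n : M) (U U' : Set Γ),
      G.IsBisection U → IsCompact U → g ∈ U →
      G.IsBisection U' → IsCompact U' → g ∈ U' →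
      germEq G 𝕜 act (G.r g) m n →
      germEq G 𝕜 act (G.d g) (act m (chi 𝕜 U)) (act n (chi 𝕜 U'))) ∧
    -- 𝕜-linearity on stalks
    (∀ (g : Γ) (c : 𝕜) (m n : M) (U : Set Γ),
      G.IsBisection U → IsCompact U → g ∈ U →
      germEq G 𝕜 act (G.d g)
        (act (m + c • n) (chi 𝕜 U)) (act m (chi 𝕜 U) + c • act n (chi 𝕜 U))) ∧
    -- R_h ∘ R_g = R_{gh} for composable arrows
    (∀ (g h : Γ) (_ : G.d g = G.r h) (m : M) (U V : Set Γ),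
      G.IsBisection U → IsCompact U → g ∈ U →
      G.IsBisection V → IsCompact V → h ∈ V →
      germEq G 𝕜 act (G.d h)
        (act (act m (chi 𝕜 U)) (chi 𝕜 V)) (act m (chi 𝕜 (G.bisMul U V)))) ∧
    -- R_x is the identity on the stalk at a unit x
    (∀ x ∈ G.units, ∀ (m : M) (W : Set Γ), W ⊆ G.units → IsOpen W →
      IsCompact W → x ∈ W → germEq G 𝕜 act x (act m (chi 𝕜 W)) m) := by
  refine ⟨fun g m n U U' hU hUc hgU hU' hU'c hgU' =>
      G.germEq_act_chi hG act_conv hU hUc hgU hU' hU'c hgU', ?_, ?_,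
    fun x hx m W hWu hWo hWc hxW => G.germEq_act_chi_units hG act_conv hx hWu hWo hWc hxW m⟩
  · intro g c m n U _ _ _
    exact G.germEq_of_eq hG (G.d_mem_units g) (by rw [act_addm, act_smulm])
  · intro g h _ m U V hU hUc _ hV hVc _
    exact G.germEq_of_eq hG (G.d_mem_units h) (G.act_chi_chi act_conv hU hUc hV hVc m)

open TopGroupoid in
/-- For a unitary right `𝕜𝒢`-module `M` over an ample groupoid,
and an arrow `g`, the map `R_g([m]_{r(g)}) = [mχ_U]_{d(g)}` between stalks
(for a compact open bisection `U` containing `g`) is well defined, `𝕜`-linear,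
functorial for composition, and the identity on units. -/
theorem stalk_action_well_defined {Γ : Type} [TopologicalSpace Γ]
    (G : TopGroupoid Γ) (hG : G.Ample) (𝕜 : Type) [CommRing 𝕜]
    (M : Type) [AddCommGroup M] [Module 𝕜 M] (act : M → (Γ → 𝕜) → M)
    (act_addm : ∀ m n f, act (m + n) f = act m f + act n f)
    (act_addf : ∀ m f₁ f₂, f₁ ∈ G.grpAlg 𝕜 → f₂ ∈ G.grpAlg 𝕜 →
      act m (f₁ + f₂) = act m f₁ + act m f₂)
    (act_smulm : ∀ (c : 𝕜) m f, act (c • m) f = c • act m f)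
    (act_smulf : ∀ (c : 𝕜) m f, f ∈ G.grpAlg 𝕜 → act m (c • f) = c • act m f)
    (act_conv : ∀ m f₁ f₂, f₁ ∈ G.grpAlg 𝕜 → f₂ ∈ G.grpAlg 𝕜 →
      act (act m f₁) f₂ = act m (G.conv f₁ f₂))
    (hunit : ∀ m : M, ∃ U : Set Γ, U ⊆ G.units ∧ IsOpen U ∧ IsCompact U ∧
      act m (chi 𝕜 U) = m) :
    -- well-definedness: independent of the representative and of the bisection
    (∀ (g : Γ) (m n : M) (U U' : Set Γ),
      G.IsBisection U → IsCompact U → g ∈ U →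
      G.IsBisection U' → IsCompact U' → g ∈ U' →
      germEq G 𝕜 act (G.r g) m n →
      germEq G 𝕜 act (G.d g) (act m (chi 𝕜 U)) (act n (chi 𝕜 U'))) ∧
    -- 𝕜-linearity on stalks
    (∀ (g : Γ) (c : 𝕜) (m n : M) (U : Set Γ),
      G.IsBisection U → IsCompact U → g ∈ U →
      germEq G 𝕜 act (G.d g)
        (act (m + c • n) (chi 𝕜 U)) (act m (chi 𝕜 U) + c • act n (chi 𝕜 U))) ∧
    -- R_h ∘ R_g = R_{gh} for composable arrows
    (∀ (g h : Γ) (_ : G.d g = G.r h) (m : M) (U V : Set Γ),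
      G.IsBisection U → IsCompact U → g ∈ U →
      G.IsBisection V → IsCompact V → h ∈ V →
      germEq G 𝕜 act (G.d h)
        (act (act m (chi 𝕜 U)) (chi 𝕜 V)) (act m (chi 𝕜 (G.bisMul U V)))) ∧
    -- R_x is the identity on the stalk at a unit x
    (∀ x ∈ G.units, ∀ (m : M) (W : Set Γ), W ⊆ G.units → IsOpen W →
      IsCompact W → x ∈ W → germEq G 𝕜 act x (act m (chi 𝕜 W)) m) :=
  stalk_action_well_defined_general G hG 𝕜 M act act_addm act_smulm act_conv
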